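/- For all real x ≠ 0, (π² − x²)/(π² + x²) ≤ (sin x)/x (Redheffer's inequality). -/

import Mathlib

/-!
Writing `y = (x/π)²`, Euler's product gives `sin x = x ∏ₖ (1 - y/k²)`. For `0 ≤ y ≤ 1` the `n`-th partial
product stays above `(1 - y)/(1 + y) · (1 + y/n)`, a bound that survives induction, hence above
`(1 - y)/(1 + y) = (π² - x²)/(π² + x²)`; this proves the inequality on
`(0, π]`. Beyond `π` the left side is negative and `sin x ≥ π - x` suffices; evenness covers `x < 0`.
-/

open Real Filter Finset

-- Cleared of denominators, the right side exceeds the left by `y (1 - y) ≥ 0`.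
lemma one_add_div_succ_le_mul_one_sub_div_sq {y m : ℝ} (hy0 : 0 ≤ y) (hy1 : y ≤ 1) (hm : 1 ≤ m) :
    1 + y / (m + 1) ≤ (1 + y / m) * (1 - y / (m + 1) ^ 2) := by
  have hm0 : 0 < m := by linarith
  rw [one_add_div (by positivity), one_add_div hm0.ne', one_sub_div (by positivity),
    div_mul_div_comm, div_le_div_iff₀ (by positivity) (by positivity)]
  nlinarith [mul_nonneg hy0 (sub_nonneg.2 hy1), mul_nonneg (mul_nonneg hy0 (sub_nonneg.2 hy1)) hm0.le]

lemma one_sub_div_one_add_mul_le_prod {y : ℝ} (hy0 : 0 ≤ y) (hy1 : y ≤ 1) (n : ℕ) :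
    (1 - y) / (1 + y) * (1 + y / (n + 1)) ≤ ∏ j ∈ range (n + 1), (1 - y / ((j : ℝ) + 1) ^ 2) := by
  induction n with
  | zero =>
    rw [prod_range_one, Nat.cast_zero, zero_add, div_one, one_pow, div_one,
      div_mul_cancel₀ _ (by positivity)]
  | succ n ih =>
    have hfactor : 0 ≤ 1 - y / ((n : ℝ) + 1 + 1) ^ 2 := by
      rw [sub_nonneg, div_le_one (by positivity)]
      nlinarith [(Nat.cast_nonneg n : (0 : ℝ) ≤ n)]
    have hstep := one_add_div_succ_le_mul_one_sub_div_sq hy0 hy1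
      (by linarith [(Nat.cast_nonneg n : (0 : ℝ) ≤ n)] : (1 : ℝ) ≤ n + 1)
    rw [prod_range_succ, Nat.cast_succ]
    calc (1 - y) / (1 + y) * (1 + y / (n + 1 + 1))
        ≤ (1 - y) / (1 + y) * ((1 + y / (n + 1)) * (1 - y / ((n : ℝ) + 1 + 1) ^ 2)) :=
          mul_le_mul_of_nonneg_left hstep (div_nonneg (by linarith) (by linarith))
      _ ≤ _ := by rw [← mul_assoc]; exact mul_le_mul_of_nonneg_right ih hfactor

lemma one_sub_div_one_add_le_prod {y : ℝ} (hy0 : 0 ≤ y) (hy1 : y ≤ 1) (n : ℕ) :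
    (1 - y) / (1 + y) ≤ ∏ j ∈ range n, (1 - y / ((j : ℝ) + 1) ^ 2) := by
  cases n with
  | zero => rw [prod_range_zero, div_le_one (by linarith)]; linarith
  | succ n =>
    refine le_trans ?_ (one_sub_div_one_add_mul_le_prod hy0 hy1 n)
    exact le_mul_of_one_le_right (div_nonneg (by linarith) (by linarith))
      (le_add_of_nonneg_right (by positivity))

lemma pi_mul_mul_one_sub_sq_div_one_add_sq_le_sin {t : ℝ} (ht0 : 0 ≤ t) (ht1 : t ≤ 1) :
    π * t * ((1 - t ^ 2) / (1 + t ^ 2)) ≤ sin (π * t) := by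
  refine ge_of_tendsto (tendsto_euler_sin_prod t) (Eventually.of_forall fun n => ?_)
  exact mul_le_mul_of_nonneg_left
    (one_sub_div_one_add_le_prod (sq_nonneg t) (pow_le_one₀ ht0 ht1) n) (by positivity)

lemma pi_sub_le_sin {x : ℝ} (hx : π ≤ x) : π - x ≤ sin x := by
  have := sin_le (sub_nonneg.2 hx)
  rw [sin_sub_pi] at this
  linarith

lemma redheffer_of_pos {x : ℝ} (hx : 0 < x) :
    (π ^ 2 - x ^ 2) / (π ^ 2 + x ^ 2) ≤ sin x / x := by
  rw [le_div_iff₀ hx]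
  rcases le_or_gt x π with hxπ | hπx
  · have h := pi_mul_mul_one_sub_sq_div_one_add_sq_le_sin (div_nonneg hx.le pi_pos.le)
      ((div_le_one pi_pos).2 hxπ)
    rwa [mul_div_cancel₀ x pi_ne_zero, div_pow, one_sub_div (by positivity),
      one_add_div (by positivity), div_div_div_cancel_right₀ (by positivity), mul_comm] at h
  · have hden : 0 < π ^ 2 + x ^ 2 := by positivity
    have := pi_sub_le_sin hπx.le
    rw [div_mul_eq_mul_div, div_le_iff₀ hden]
    nlinarith [mul_le_mul_of_nonneg_right this hden.le, mul_nonneg pi_pos.le (sq_nonneg (π - x))]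

theorem redheffer (x : ℝ) (hx : x ≠ 0) :
    (π ^ 2 - x ^ 2) / (π ^ 2 + x ^ 2) ≤ Real.sin x / x := by
  rcases hx.lt_or_gt with hneg | hpos
  · simpa [neg_div_neg_eq] using redheffer_of_pos (neg_pos.2 hneg)
  · exact redheffer_of_pos hpos
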